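/- The set {(x, y) ∈ ℂ² : p(x,y) = 0, ∂p/∂x(x,y) = 0, ∂p/∂y(x,y) = 0} of singular points of the affine curve {p = 0} is exactly the set of pairwise intersection points ( jk/(2d+1), (2d+1−j)(2d+1−k)/(2d+1) ) for 0 ≤ j < k ≤ d, and it has exactly d(d+1)/2 elements. -/

import Mathlib

open MvPolynomial

/-! At a point where the factor `R_j` of `p = ∏ R_k` vanishes, the gradient of `p` is the
gradient of `R_j` times the product of the other factors. No `R_k` has vanishing gradient, so
`p` is singular exactly where two of its lines meet. The lines `R_j` and `R_k` meet at
`interPt d j k`, where `R_m` takes the value `(m - j)(m - k)`: the line `R_m` passes through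
that point only for `m ∈ {j, k}`, which makes the intersection points pairwise distinct. -/

/-- The affine linear form `R_k(x,y,1) = (2d+1-k)x + ky - k(2d+1-k)` as a polynomial
in two variables. -/
noncomputable def R2 (d k : ℕ) : MvPolynomial (Fin 2) ℂ :=
  C (2*(d:ℂ)+1-(k:ℂ)) * X 0 + C (k:ℂ) * X 1 - C ((k:ℂ)*(2*(d:ℂ)+1-(k:ℂ)))

/-- `p(x,y) = P(x,y,1) = ∏_{k=0}^{d} R_k(x,y,1)` as a polynomial in two variables. -/
noncomputable def pPoly (d : ℕ) : MvPolynomial (Fin 2) ℂ :=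
  ∏ k ∈ Finset.range (d+1), R2 d k

/-- The intersection point `( jk/(2d+1), (2d+1-j)(2d+1-k)/(2d+1) ) ∈ ℂ²`. -/
noncomputable def interPt (d j k : ℕ) : ℂ × ℂ :=
  ((j:ℂ)*(k:ℂ)/(2*(d:ℂ)+1),
   (2*(d:ℂ)+1-(j:ℂ))*(2*(d:ℂ)+1-(k:ℂ))/(2*(d:ℂ)+1))

namespace MvPolynomial

variable {σ ι R : Type*} [CommRing R]

def IsSingularPoint (f : MvPolynomial σ R) (x : σ → R) : Prop :=
  eval x f = 0 ∧ ∀ i, eval x (pderiv i f) = 0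

theorem eval_pderiv_prod_of_eval_eq_zero [DecidableEq ι] {s : Finset ι}
    {g : ι → MvPolynomial σ R} {x : σ → R} (i : σ) {j : ι} (hj : j ∈ s)
    (hgj : eval x (g j) = 0) :
    eval x (pderiv i (∏ k ∈ s, g k)) =
      eval x (pderiv i (g j)) * ∏ k ∈ s.erase j, eval x (g k) := by
  rw [← Finset.mul_prod_erase s g hj, Derivation.leibniz, map_add, smul_eq_mul, smul_eq_mul,
    map_mul, map_mul, hgj, zero_mul, zero_add, map_prod, mul_comm]

theorem isSingularPoint_prod_iff [IsDomain R] {s : Finset ι} {g : ι → MvPolynomial σ R}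
    {x : σ → R} (hg : ∀ k ∈ s, ∃ i, eval x (pderiv i (g k)) ≠ 0) :
    IsSingularPoint (∏ k ∈ s, g k) x ↔
      ∃ j ∈ s, ∃ k ∈ s, j ≠ k ∧ eval x (g j) = 0 ∧ eval x (g k) = 0 := by
  classical
  simp only [IsSingularPoint, map_prod, Finset.prod_eq_zero_iff]
  constructor
  · rintro ⟨⟨j, hj, hgj⟩, hpderiv⟩
    obtain ⟨i, hi⟩ := hg j hj
    have hrest := hpderiv i
    rw [eval_pderiv_prod_of_eval_eq_zero i hj hgj, mul_eq_zero, or_iff_right hi,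
      Finset.prod_eq_zero_iff] at hrest
    obtain ⟨k, hk, hgk⟩ := hrest
    exact ⟨j, hj, k, Finset.mem_of_mem_erase hk, (Finset.ne_of_mem_erase hk).symm, hgj, hgk⟩
  · rintro ⟨j, hj, k, hk, hjk, hgj, hgk⟩
    refine ⟨⟨j, hj, hgj⟩, fun i => ?_⟩
    rw [eval_pderiv_prod_of_eval_eq_zero i hj hgj,
      Finset.prod_eq_zero (Finset.mem_erase.mpr ⟨hjk.symm, hk⟩) hgk, mul_zero]

end MvPolynomial

lemma two_mul_add_one_ne_zero (d : ℕ) : (2*(d:ℂ)+1) ≠ 0 := by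
  exact_mod_cast (by omega : 2*d+1 ≠ 0)

lemma two_mul_add_one_sub_ne_zero {d k : ℕ} (hk : k ≤ 2*d) : (2*(d:ℂ)+1-(k:ℂ)) ≠ 0 := by
  rw [sub_ne_zero]
  exact_mod_cast (by omega : 2*d+1 ≠ k)

lemma eval_R2 (d k : ℕ) (x y : ℂ) :
    eval ![x, y] (R2 d k) = (2*(d:ℂ)+1-(k:ℂ))*x + (k:ℂ)*y - (k:ℂ)*(2*(d:ℂ)+1-(k:ℂ)) := by
  simp [R2]

lemma pderiv_zero_R2 (d k : ℕ) : pderiv 0 (R2 d k) = C (2*(d:ℂ)+1-(k:ℂ)) := by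
  simp [R2, pderiv_X, Pi.single]

lemma eval_R2_interPt (d m j k : ℕ) :
    eval ![(interPt d j k).1, (interPt d j k).2] (R2 d m) = ((m:ℂ)-(j:ℂ))*((m:ℂ)-(k:ℂ)) := by
  have := two_mul_add_one_ne_zero d
  rw [eval_R2]
  simp only [interPt]
  field_simp
  ring

lemma eval_R2_interPt_eq_zero_iff {d m j k : ℕ} :
    eval ![(interPt d j k).1, (interPt d j k).2] (R2 d m) = 0 ↔ m = j ∨ m = k := by
  rw [eval_R2_interPt, mul_eq_zero, sub_eq_zero, sub_eq_zero]
  norm_cast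

lemma eval_R2_eq_zero_and_eval_R2_eq_zero_iff {d j k : ℕ} (hjk : j ≠ k) (v : ℂ × ℂ) :
    (eval ![v.1, v.2] (R2 d j) = 0 ∧ eval ![v.1, v.2] (R2 d k) = 0) ↔ v = interPt d j k := by
  constructor
  · rintro ⟨hj, hk⟩
    rw [eval_R2] at hj hk
    have hD := two_mul_add_one_ne_zero d
    have hkj : (k:ℂ) - j ≠ 0 := sub_ne_zero.mpr (by exact_mod_cast hjk.symm)
    have hx : ((k:ℂ) - j) * ((2*(d:ℂ)+1) * v.1 - j*k) = 0 := by
      linear_combination (k:ℂ) * hj - (j:ℂ) * hk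
    have hy : ((k:ℂ) - j) * ((2*(d:ℂ)+1) * v.2 - (2*(d:ℂ)+1-j)*(2*(d:ℂ)+1-k)) = 0 := by
      linear_combination (2*(d:ℂ)+1-j) * hk - (2*(d:ℂ)+1-k) * hj
    rw [mul_eq_zero, or_iff_right hkj] at hx hy
    ext
    · simp only [interPt]; field_simp; linear_combination hx
    · simp only [interPt]; field_simp; linear_combination hy
  · rintro rfl
    simp [eval_R2_interPt_eq_zero_iff]

lemma interPt_injOn (d : ℕ) :
    Set.InjOn (fun q : ℕ × ℕ => interPt d q.1 q.2) {q : ℕ × ℕ | q.1 < q.2} := by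
  rintro ⟨j, k⟩ hjk ⟨j', k'⟩ hjk' h
  simp only [Set.mem_ofPred_eq] at hjk hjk' h
  have lines_through (m : ℕ) : m = j ∨ m = k ↔ m = j' ∨ m = k' := by
    rw [← eval_R2_interPt_eq_zero_iff, ← eval_R2_interPt_eq_zero_iff, h]
  have := lines_through j
  have := lines_through k
  simp only [Prod.mk.injEq]
  omega

lemma isSingularPoint_pPoly_iff (d : ℕ) (v : ℂ × ℂ) :
    IsSingularPoint (pPoly d) ![v.1, v.2] ↔ ∃ j k : ℕ, j < k ∧ k ≤ d ∧ v = interPt d j k := by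
  have smooth : ∀ k ∈ Finset.range (d+1), ∃ i, eval ![v.1, v.2] (pderiv i (R2 d k)) ≠ 0 :=
    fun k hk => ⟨0, by
      rw [pderiv_zero_R2, eval_C]
      exact two_mul_add_one_sub_ne_zero (by simp at hk; omega)⟩
  rw [pPoly, isSingularPoint_prod_iff smooth]
  constructor
  · rintro ⟨j, hj, k, hk, hjk, hvj, hvk⟩
    simp only [Finset.mem_range] at hj hk
    rcases hjk.lt_or_gt with hlt | hlt
    · exact ⟨j, k, hlt, by omega, (eval_R2_eq_zero_and_eval_R2_eq_zero_iff hjk v).mp ⟨hvj, hvk⟩⟩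
    · exact ⟨k, j, hlt, by omega,
        (eval_R2_eq_zero_and_eval_R2_eq_zero_iff hjk.symm v).mp ⟨hvk, hvj⟩⟩
  · rintro ⟨j, k, hjk, hkd, hv⟩
    exact ⟨j, by simp; omega, k, by simp; omega, hjk.ne,
      (eval_R2_eq_zero_and_eval_R2_eq_zero_iff hjk.ne v).mpr hv⟩

lemma ncard_interPt (d : ℕ) :
    {v : ℂ × ℂ | ∃ j k : ℕ, j < k ∧ k ≤ d ∧ v = interPt d j k}.ncard = d*(d+1)/2 := by
  set pairs : Finset (ℕ × ℕ) := {q ∈ Finset.range (d+1) ×ˢ Finset.range (d+1) | q.1 < q.2}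
  have himage : {v : ℂ × ℂ | ∃ j k : ℕ, j < k ∧ k ≤ d ∧ v = interPt d j k} =
      (fun q : ℕ × ℕ => interPt d q.1 q.2) '' pairs := by
    ext v
    simp only [pairs, Finset.coe_filter, Finset.mem_product, Finset.mem_range, Set.mem_image,
      Set.mem_ofPred_eq, Prod.exists]
    constructor
    · rintro ⟨j, k, hjk, hkd, rfl⟩
      exact ⟨j, k, ⟨⟨by omega, by omega⟩, hjk⟩, rfl⟩
    · rintro ⟨j, k, ⟨⟨-, hkd⟩, hjk⟩, rfl⟩
      exact ⟨j, k, hjk, by omega, rfl⟩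
  have hinj : Set.InjOn (fun q : ℕ × ℕ => interPt d q.1 q.2) pairs :=
    (interPt_injOn d).mono fun q hq => (Finset.mem_filter.mp hq).2
  rw [himage, hinj.ncard_image, Set.ncard_coe_finset,
    Finset.card_product_filter_lt, Finset.card_range, Nat.choose_two_right, Nat.add_sub_cancel,
    mul_comm]

theorem stmt4_general (d : ℕ) :
    ({v : ℂ × ℂ | eval ![v.1, v.2] (pPoly d) = 0 ∧
        eval ![v.1, v.2] (pderiv 0 (pPoly d)) = 0 ∧
        eval ![v.1, v.2] (pderiv 1 (pPoly d)) = 0}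
      = {v : ℂ × ℂ | ∃ j k : ℕ, j < k ∧ k ≤ d ∧ v = interPt d j k}) ∧
    ({v : ℂ × ℂ | eval ![v.1, v.2] (pPoly d) = 0 ∧
        eval ![v.1, v.2] (pderiv 0 (pPoly d)) = 0 ∧
        eval ![v.1, v.2] (pderiv 1 (pPoly d)) = 0}.ncard = d*(d+1)/2) := by
  have hsing : {v : ℂ × ℂ | eval ![v.1, v.2] (pPoly d) = 0 ∧
        eval ![v.1, v.2] (pderiv 0 (pPoly d)) = 0 ∧
        eval ![v.1, v.2] (pderiv 1 (pPoly d)) = 0}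
      = {v : ℂ × ℂ | ∃ j k : ℕ, j < k ∧ k ≤ d ∧ v = interPt d j k} := by
    ext v
    rw [Set.mem_ofPred_eq, Set.mem_ofPred_eq, ← isSingularPoint_pPoly_iff, IsSingularPoint,
      Fin.forall_fin_two]
  exact ⟨hsing, hsing ▸ ncard_interPt d⟩

/-- The singular points of the affine curve `{p = 0}` are exactly the pairwise
intersection points of the lines of `P`, and there are exactly `d(d+1)/2` of them. -/
theorem stmt4 (d : ℕ) (hd : 1 ≤ d) :
    ({v : ℂ × ℂ | eval ![v.1, v.2] (pPoly d) = 0 ∧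
        eval ![v.1, v.2] (pderiv 0 (pPoly d)) = 0 ∧
        eval ![v.1, v.2] (pderiv 1 (pPoly d)) = 0}
      = {v : ℂ × ℂ | ∃ j k : ℕ, j < k ∧ k ≤ d ∧ v = interPt d j k}) ∧
    ({v : ℂ × ℂ | eval ![v.1, v.2] (pPoly d) = 0 ∧
        eval ![v.1, v.2] (pderiv 0 (pPoly d)) = 0 ∧
        eval ![v.1, v.2] (pderiv 1 (pPoly d)) = 0}.ncard = d*(d+1)/2) :=
  stmt4_general d
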